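/- arXiv:2302.06260 — 6 statements merged into one kernel-verified Lean document; each statement's English description precedes it below -/
import Mathlib

section
/- Consider the convex optimization problem: minimize Σ_{n=1}^N λ_r (x_jam,n + x_radar,n) over x_jam,n ≥ 0, x_radar,n ≥ 0, subject to Σ_n λ_r (x_jam,n g_jam + x_radar,n g_radar,n) = C_1 and x_radar,n ≥ C_{2,n}^2 for all n, where λ_r > 0, 0 ≤ g_radar,n < g_jam, C_{2,n}^2 > 0, and C_1 ≥ λ_r Σ_n C_{2,n}^2 g_radar,n. Then at any optimum, x_radar,n = C_{2,n}^2 for all n, and the x_jam,n sum to (C_1 − λ_r Σ_n C_{2,n}^2 g_radar,n)/(λ_r g_jam); in particular the optimal objective value equals (C_1 − λ_r Σ_n C_{2,n}^2 g_radar,n)/g_jam + λ_r Σ_n C_{2,n}^2. -/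
/-- Theorem 1 (problem (45)): at any optimum of the power minimization LP,
`x_radar,n = C_{2,n}²` for all `n`, the jamming powers sum to
`(C₁ − λ_r Σ C_{2,n}² g_radar,n)/(λ_r g_jam)`, and the optimal objective equals
`(C₁ − λ_r Σ C_{2,n}² g_radar,n)/g_jam + λ_r Σ C_{2,n}²`. -/
theorem power_minimization_optimum (N : ℕ) (hN : 1 ≤ N)
    (lamr gjam C1 : ℝ) (gr C2 : Fin N → ℝ)
    (hlam : 0 < lamr) (hgr : ∀ n, 0 ≤ gr n) (hgjam : ∀ n, gr n < gjam)
    (hC2 : ∀ n, 0 < C2 n)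
    (hfeas : lamr * ∑ n, (C2 n) ^ 2 * gr n ≤ C1)
    (xj xr : Fin N → ℝ)
    (hxj : ∀ n, 0 ≤ xj n) (hxr : ∀ n, (C2 n) ^ 2 ≤ xr n)
    (hcon : ∑ n, lamr * (xj n * gjam + xr n * gr n) = C1)
    (hopt : ∀ yj yr : Fin N → ℝ, (∀ n, 0 ≤ yj n) → (∀ n, (C2 n) ^ 2 ≤ yr n) →
      (∑ n, lamr * (yj n * gjam + yr n * gr n) = C1) →
      ∑ n, lamr * (xj n + xr n) ≤ ∑ n, lamr * (yj n + yr n)) :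
    (∀ n, xr n = (C2 n) ^ 2) ∧
    (∑ n, xj n = (C1 - lamr * ∑ n, (C2 n) ^ 2 * gr n) / (lamr * gjam)) ∧
    (∑ n, lamr * (xj n + xr n) =
      (C1 - lamr * ∑ n, (C2 n) ^ 2 * gr n) / gjam + lamr * ∑ n, (C2 n) ^ 2) := by
  have i0 : Fin N := ⟨0, hN⟩
  have hgj : 0 < gjam := lt_of_le_of_lt (hgr i0) (hgjam i0)
  have hlg : 0 < lamr * gjam := mul_pos hlam hgj
  set G := ∑ n, (C2 n) ^ 2 * gr n with hG
  set T := ∑ n, (C2 n) ^ 2 with hT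
  set A := ∑ n, xj n with hA
  set R := ∑ n, xr n with hR
  set B := ∑ n, xr n * gr n with hB
  set S := (C1 - lamr * G) / (lamr * gjam) with hS
  have hS0 : 0 ≤ S := div_nonneg (by linarith) (le_of_lt hlg)
  -- rewrite constraint
  have hconAB : lamr * gjam * A + lamr * B = C1 := by
    rw [hA, hB, Finset.mul_sum, Finset.mul_sum, ← Finset.sum_add_distrib, ← hcon]
    apply Finset.sum_congr rfl
    intro n _
    ring
  -- candidate feasible point
  set yj : Fin N → ℝ := fun n => if n = i0 then S else 0 with hyj
  have hyjsum : ∑ n, yj n = S := by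
    simp [hyj]
  have hyjnn : ∀ n, 0 ≤ yj n := by
    intro n; simp only [hyj]; split <;> simp [hS0]
  have hycon : ∑ n, lamr * (yj n * gjam + (fun n => (C2 n) ^ 2) n * gr n) = C1 := by
    have : ∑ n, lamr * (yj n * gjam + (C2 n) ^ 2 * gr n)
        = lamr * gjam * (∑ n, yj n) + lamr * G := by
      rw [hG, Finset.mul_sum, Finset.mul_sum, ← Finset.sum_add_distrib]
      apply Finset.sum_congr rfl
      intro n _; ring
    simp only [this, hyjsum]
    rw [hS]
    field_simp
    ring
  have hle := hopt yj (fun n => (C2 n) ^ 2) hyjnn (fun n => le_refl _) hycon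
  have hobjx : ∑ n, lamr * (xj n + xr n) = lamr * (A + R) := by
    rw [hA, hR, mul_add, Finset.mul_sum, Finset.mul_sum, ← Finset.sum_add_distrib]
    apply Finset.sum_congr rfl
    intro n _; ring
  have hobjy : ∑ n, lamr * (yj n + (fun n => (C2 n) ^ 2) n) = lamr * (S + T) := by
    have : ∑ n, lamr * (yj n + (C2 n) ^ 2) = lamr * ((∑ n, yj n) + T) := by
      rw [hT, mul_add, Finset.mul_sum, Finset.mul_sum, ← Finset.sum_add_distrib]
      apply Finset.sum_congr rfl
      intro n _; ring
    simpa [hyjsum] using this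
  rw [hobjx] at hle
  rw [hobjy] at hle
  -- derive key sum inequality
  have hAval : lamr * gjam * A = C1 - lamr * B := by linarith
  have hSval : lamr * gjam * S = C1 - lamr * G := by
    rw [hS]; field_simp
  have hkey : gjam * (R - T) - (B - G) ≤ 0 := by
    have h1 : lamr * gjam * (A + R) ≤ lamr * gjam * (S + T) := by
      apply mul_le_mul_of_nonneg_left _ (le_of_lt hlg)
      exact le_of_mul_le_mul_left (by linarith) hlam
    nlinarith
  have hsumkey : ∑ n, (xr n - (C2 n) ^ 2) * (gjam - gr n) ≤ 0 := by
    have : ∑ n, (xr n - (C2 n) ^ 2) * (gjam - gr n)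
        = gjam * (R - T) - (B - G) := by
      rw [hR, hT, hB, hG, mul_sub, Finset.mul_sum, Finset.mul_sum,
        ← Finset.sum_sub_distrib, ← Finset.sum_sub_distrib, ← Finset.sum_sub_distrib]
      apply Finset.sum_congr rfl
      intro n _; ring
    linarith [this.ge, this.le, hkey]
  have hterm : ∀ n ∈ Finset.univ, (0:ℝ) ≤ (xr n - (C2 n) ^ 2) * (gjam - gr n) := by
    intro n _
    exact mul_nonneg (by linarith [hxr n]) (by linarith [hgjam n])
  have hsum0 : ∑ n, (xr n - (C2 n) ^ 2) * (gjam - gr n) = 0 :=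
    le_antisymm hsumkey (Finset.sum_nonneg hterm)
  have hxrC2 : ∀ n, xr n = (C2 n) ^ 2 := by
    intro n
    have := (Finset.sum_eq_zero_iff_of_nonneg hterm).1 hsum0 n (Finset.mem_univ n)
    have h2 : 0 < gjam - gr n := by linarith [hgjam n]
    have := mul_eq_zero.1 this
    rcases this with h | h
    · linarith
    · linarith
  -- sums with xr = C2²
  have hReq : R = T := by
    rw [hR, hT]; exact Finset.sum_congr rfl (fun n _ => hxrC2 n)
  have hBeq : B = G := by
    rw [hB, hG]; exact Finset.sum_congr rfl (fun n _ => by rw [hxrC2 n])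
  have hAeq : A = S := by
    have : lamr * gjam * A = lamr * gjam * S := by rw [hAval, hSval, hBeq]
    exact mul_left_cancel₀ (ne_of_gt hlg) this
  refine ⟨hxrC2, hAeq, ?_⟩
  rw [hobjx, hAeq, hReq, hS]
  field_simp
end

section
/- In the power minimization LP above (minimize Σ_n λ_r(x_jam,n + x_radar,n) subject to Σ_n λ_r(x_jam,n g_jam + x_radar,n g_radar,n) = C_1, x_radar,n ≥ C_{2,n}^2, x ≥ 0, with g_radar,n < g_jam for all n), the equal-allocation solution x_radar,n = C_{2,n}^2 and x_jam,n = C_1/(N λ_r g_jam) − (1/(N g_jam)) Σ_m C_{2,m}^2 g_radar,m (assumed nonnegative) is feasible and optimal. -/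
open Finset

/-- Each unit of `y` above the floor `b` carries weight `gᵢ ≤ G`, no more than a unit of `x`,
so meeting the same weighted load through `x` costs no more total mass. -/
theorem add_sum_le_sum_add_sum_of_weighted_sum_eq {ι : Type*} [Fintype ι]
    {G X : ℝ} {g b x y : ι → ℝ} (hG : 0 < G) (hg : ∀ i, g i ≤ G) (hb : ∀ i, b i ≤ y i)
    (h : X * G + ∑ i, b i * g i = (∑ i, x i) * G + ∑ i, y i * g i) :
    X + ∑ i, b i ≤ ∑ i, x i + ∑ i, y i := by
  have hweights : (∑ i, b i - ∑ i, y i) * G ≤ ∑ i, b i * g i - ∑ i, y i * g i := by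
    rw [← sum_sub_distrib, ← sum_sub_distrib, sum_mul]
    gcongr with i
    nlinarith [hb i, hg i]
  have hscaled : (∑ i, b i - ∑ i, y i) * G ≤ (∑ i, x i - X) * G := by linarith
  linarith [le_of_mul_le_mul_right hscaled hG]

theorem power_minimization_closed_form_general (N : ℕ) (hN : 1 ≤ N)
    (lamr gjam C1 : ℝ) (gr C2 : Fin N → ℝ)
    (hlam : 0 < lamr) (hgr : ∀ n, 0 ≤ gr n) (hgjam : ∀ n, gr n < gjam)
    (xjval : ℝ)
    (hxjval : xjval = C1 / (N * lamr * gjam) -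
      (1 / (N * gjam)) * ∑ m, (C2 m) ^ 2 * gr m)
    (hnonneg : 0 ≤ xjval) :
    ((∀ n : Fin N, 0 ≤ xjval) ∧ (∀ n : Fin N, (C2 n) ^ 2 ≤ (C2 n) ^ 2) ∧
      ∑ _n : Fin N, lamr * (xjval * gjam + (C2 _n) ^ 2 * gr _n) = C1) ∧
    (∀ yj yr : Fin N → ℝ, (∀ n, 0 ≤ yj n) → (∀ n, (C2 n) ^ 2 ≤ yr n) →
      (∑ n, lamr * (yj n * gjam + yr n * gr n) = C1) →
      ∑ _n : Fin N, lamr * (xjval + (C2 _n) ^ 2) ≤ ∑ n, lamr * (yj n + yr n)) := by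
  have hgjam_pos : 0 < gjam := (hgr ⟨0, hN⟩).trans_lt (hgjam _)
  have hbalance : lamr * (N * xjval * gjam + ∑ n, C2 n ^ 2 * gr n) = C1 := by
    rw [hxjval]
    field_simp
    ring
  refine ⟨⟨fun _ ↦ hnonneg, fun _ ↦ le_rfl, ?_⟩, fun yj yr _ hyr hcon ↦ ?_⟩
  · simpa [← mul_sum, sum_add_distrib, mul_assoc] using hbalance
  · rw [← mul_sum, ← mul_sum, sum_add_distrib, sum_add_distrib, sum_const, card_univ,
      Fintype.card_fin, nsmul_eq_mul]
    refine mul_le_mul_of_nonneg_left ?_ hlam.le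
    refine add_sum_le_sum_add_sum_of_weighted_sum_eq hgjam_pos (fun n ↦ (hgjam n).le) hyr ?_
    rw [← mul_sum, sum_add_distrib, ← sum_mul, ← hbalance] at hcon
    rw [mul_left_cancel₀ hlam.ne' hcon]

/-- Eq. (28): the equal-allocation solution `x_radar,n = C_{2,n}²`,
`x_jam,n = C₁/(N λ_r g_jam) − (1/(N g_jam)) Σ C_{2,m}² g_radar,m`
is feasible and optimal for the power minimization LP. -/
theorem power_minimization_closed_form (N : ℕ) (hN : 1 ≤ N)
    (lamr gjam C1 : ℝ) (gr C2 : Fin N → ℝ)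
    (hlam : 0 < lamr) (hgr : ∀ n, 0 ≤ gr n) (hgjam : ∀ n, gr n < gjam)
    (hC2 : ∀ n, 0 < C2 n)
    (hfeas : lamr * ∑ n, (C2 n) ^ 2 * gr n ≤ C1)
    (xjval : ℝ)
    (hxjval : xjval = C1 / (N * lamr * gjam) -
      (1 / (N * gjam)) * ∑ m, (C2 m) ^ 2 * gr m)
    (hnonneg : 0 ≤ xjval) :
    ((∀ n : Fin N, 0 ≤ xjval) ∧ (∀ n : Fin N, (C2 n) ^ 2 ≤ (C2 n) ^ 2) ∧
      ∑ _n : Fin N, lamr * (xjval * gjam + (C2 _n) ^ 2 * gr _n) = C1) ∧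
    (∀ yj yr : Fin N → ℝ, (∀ n, 0 ≤ yj n) → (∀ n, (C2 n) ^ 2 ≤ yr n) →
      (∑ n, lamr * (yj n * gjam + yr n * gr n) = C1) →
      ∑ _n : Fin N, lamr * (xjval + (C2 _n) ^ 2) ≤ ∑ n, lamr * (yj n + yr n)) :=
  power_minimization_closed_form_general N hN lamr gjam C1 gr C2 hlam hgr hgjam xjval hxjval hnonneg
end

section
/- The minimum value p_th of the total transmit power in the power minimization problem equals C_1/g_jam − (λ_r/g_jam) Σ_n C_{2,n}^2 g_radar,n + λ_r Σ_n C_{2,n}^2, where C_1 = N(|h_sd|^2 p_s − σ^2 γ_s)/γ_s and C_{2,n}^2 = γ_r σ̃^2/(β_n^2 g_n). -/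
/-! Multiplying the objective by `g_jam` and subtracting the power constraint leaves
`λ_r Σ_n x_{r,n} (g_jam − g_radar,n)`, which does not involve the jamming powers and is increasing
in each radar power because `g_radar,n ≤ g_jam`. Hence the optimum takes every radar power at its
lower bound `C_{2,n}²` and spends the remaining budget on jamming, which is possible (with
nonnegative jamming power) exactly under the feasibility condition. -/

open Finset

section PowerMinimization

variable {ι : Type*} [Fintype ι] (lamr gjam C : ℝ) (gr c : ι → ℝ)

def feasibleTotalPowers : Set ℝ :=
  {p | ∃ xj xr : ι → ℝ, (∀ n, 0 ≤ xj n) ∧ (∀ n, c n ≤ xr n) ∧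
    (∑ n, lamr * (xj n * gjam + xr n * gr n) = C) ∧ p = ∑ n, lamr * (xj n + xr n)}

variable {lamr gjam C gr c}

theorem mul_sum_power_sub_sum_received (xj xr : ι → ℝ) :
    gjam * ∑ n, lamr * (xj n + xr n) - ∑ n, lamr * (xj n * gjam + xr n * gr n) =
      lamr * ∑ n, xr n * (gjam - gr n) := by
  simp only [mul_sum, ← sum_sub_distrib]
  exact sum_congr rfl fun n _ => by ring

theorem le_of_mem_feasibleTotalPowers (hlamr : 0 ≤ lamr) (hgjam : 0 < gjam)
    (hgr : ∀ n, gr n ≤ gjam) {p : ℝ} (hp : p ∈ feasibleTotalPowers lamr gjam C gr c) :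
    (C + lamr * ∑ n, c n * (gjam - gr n)) / gjam ≤ p := by
  obtain ⟨xj, xr, -, hxr, hC, rfl⟩ := hp
  have hradar : ∑ n, c n * (gjam - gr n) ≤ ∑ n, xr n * (gjam - gr n) :=
    sum_le_sum fun n _ => mul_le_mul_of_nonneg_right (hxr n) (sub_nonneg.2 (hgr n))
  have hsplit := mul_sum_power_sub_sum_received (lamr := lamr) (gjam := gjam) (gr := gr) xj xr
  rw [div_le_iff₀' hgjam]
  nlinarith [mul_le_mul_of_nonneg_left hradar hlamr]

theorem mem_feasibleTotalPowers [Nonempty ι] (hlamr : 0 < lamr) (hgjam : 0 < gjam)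
    (hfeas : lamr * ∑ n, c n * gr n ≤ C) :
    (C + lamr * ∑ n, c n * (gjam - gr n)) / gjam ∈ feasibleTotalPowers lamr gjam C gr c := by
  classical
  obtain ⟨i⟩ := ‹Nonempty ι›
  set t := (C - lamr * ∑ n, c n * gr n) / (lamr * gjam)
  have hsingle : ∑ n, Pi.single i t n = t := by simp
  refine ⟨Pi.single i t, c, fun n => ?_, fun n => le_rfl, ?_, ?_⟩
  · rcases eq_or_ne n i with rfl | hn
    · simpa using div_nonneg (sub_nonneg.2 hfeas) (mul_pos hlamr hgjam).le
    · simp [hn]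
  · simp only [mul_add, sum_add_distrib, ← mul_sum, ← sum_mul, hsingle, t]
    field_simp
    ring
  · simp only [mul_add, sum_add_distrib, ← mul_sum, hsingle, t, mul_sub, sum_sub_distrib, ← sum_mul]
    field_simp
    ring

theorem isLeast_feasibleTotalPowers [Nonempty ι] (hlamr : 0 < lamr) (hgjam : 0 < gjam)
    (hgr : ∀ n, gr n ≤ gjam) (hfeas : lamr * ∑ n, c n * gr n ≤ C) :
    IsLeast (feasibleTotalPowers lamr gjam C gr c)
      ((C + lamr * ∑ n, c n * (gjam - gr n)) / gjam) :=
  ⟨mem_feasibleTotalPowers hlamr hgjam hfeas,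
    fun _ hp => le_of_mem_feasibleTotalPowers hlamr.le hgjam hgr hp⟩

end PowerMinimization

theorem minimum_total_power_general (N : ℕ) (hN : 1 ≤ N)
    (lamr gjam : ℝ) (gr : Fin N → ℝ)
    (hlam : 0 < lamr) (hgr : ∀ n, 0 ≤ gr n) (hgjam : ∀ n, gr n < gjam)
    (C1 : ℝ)
    (C2sq : Fin N → ℝ)
    (hfeas : lamr * ∑ n, C2sq n * gr n ≤ C1)
    (pth : ℝ)
    (hpth : pth = C1 / gjam - (lamr / gjam) * ∑ n, C2sq n * gr n +
      lamr * ∑ n, C2sq n) :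
    IsLeast {p : ℝ | ∃ xj xr : Fin N → ℝ, (∀ n, 0 ≤ xj n) ∧
      (∀ n, C2sq n ≤ xr n) ∧
      (∑ n, lamr * (xj n * gjam + xr n * gr n) = C1) ∧
      p = ∑ n, lamr * (xj n + xr n)} pth := by
  have : Nonempty (Fin N) := ⟨⟨0, hN⟩⟩
  have hgjam0 : 0 < gjam := (hgr ⟨0, hN⟩).trans_lt (hgjam ⟨0, hN⟩)
  have hpth' : pth = (C1 + lamr * ∑ n, C2sq n * (gjam - gr n)) / gjam := by
    rw [hpth]
    simp only [mul_sub, sum_sub_distrib, ← sum_mul]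
    field_simp
    ring
  rw [hpth']
  exact isLeast_feasibleTotalPowers hlam hgjam0 (fun n => (hgjam n).le) hfeas

/-- Theorem 2 (eq. (29)): the minimum total transmit power of the power
minimization LP equals
`p_th = C₁/g_jam − (λ_r/g_jam) Σ C_{2,n}² g_radar,n + λ_r Σ C_{2,n}²`,
where `C₁ = N(|h_sd|² p_s − σ² γ_s)/γ_s` and `C_{2,n}² = γ_r σ̃²/(β_n² g_n)`. -/
theorem minimum_total_power (N : ℕ) (hN : 1 ≤ N)
    (lamr gjam : ℝ) (gr : Fin N → ℝ)
    (hlam : 0 < lamr) (hgr : ∀ n, 0 ≤ gr n) (hgjam : ∀ n, gr n < gjam)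
    (hsd : ℂ) (ps sigma2 gammas gammar sigmat2 : ℝ)
    (hps : 0 < ps) (hsig : 0 < sigma2) (hgs : 0 < gammas) (hgamr : 0 < gammar)
    (hsigt : 0 < sigmat2) (beta g : Fin N → ℝ)
    (hbeta : ∀ n, 0 < beta n) (hg : ∀ n, 0 < g n)
    (C1 : ℝ) (hC1 : C1 = N * (‖hsd‖ ^ 2 * ps - sigma2 * gammas) / gammas)
    (C2sq : Fin N → ℝ)
    (hC2sq : ∀ n, C2sq n = gammar * sigmat2 / ((beta n) ^ 2 * g n))
    (hfeas : lamr * ∑ n, C2sq n * gr n ≤ C1)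
    (pth : ℝ)
    (hpth : pth = C1 / gjam - (lamr / gjam) * ∑ n, C2sq n * gr n +
      lamr * ∑ n, C2sq n) :
    IsLeast {p : ℝ | ∃ xj xr : Fin N → ℝ, (∀ n, 0 ≤ xj n) ∧
      (∀ n, C2sq n ≤ xr n) ∧
      (∑ n, lamr * (xj n * gjam + xr n * gr n) = C1) ∧
      p = ∑ n, lamr * (xj n + xr n)} pth :=
  minimum_total_power_general N hN lamr gjam gr hlam hgr hgjam C1 C2sq hfeas pth hpth
end

section
/- In the simplified power minimization problem with additional variables x_sum,n, x_new,n, x_jam,n ≥ 0: minimize Σ_n (λ_r(x_sum,n + x_new,n) + λ_w x_jam,n) subject to Σ_n (λ_r x_sum,n g_sum,n + λ_w x_jam,n g_jam) = C_1 and √(g_radar,n/g_sum,n)·√x_sum,n + √(g_jam/g_sum,n)·√x_new,n ≥ C_{2,n}, where g_jam < g_sum,n for all n — any optimal solution satisfies x_jam,n = 0 for all n. -/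
/-!
If some slot `m` jams with `x_jam,m > 0`, move that power into `x_sum,m` at the rate
`λ_w g_jam / (λ_r g_sum,m)`. The equality constraint is unchanged, the rate constraint only
improves because `x_sum,m` grows, and the cost drops by `λ_w x_jam,m (1 - g_jam / g_sum,m) > 0`,
contradicting optimality.
-/

open Function

theorem Fintype.sum_apply_update₂ {ι α β M : Type*} [Fintype ι] [DecidableEq ι]
    [AddCommGroup M] (F : ι → α → β → M) (f : ι → α) (g : ι → β) (m : ι) (a : α) (b : β) :
    ∑ i, F i (update f m a i) (update g m b i) =
      ∑ i, F i (f i) (g i) + (F m a b - F m (f m) (g m)) := by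
  rw [← sub_eq_iff_eq_add', ← Finset.sum_sub_distrib]
  refine (Fintype.sum_eq_single m fun i hi => ?_).trans ?_ <;> simp_all

section Exchange

variable {lr lw g gj j : ℝ}

theorem exchange_preserves_received (hlr : 0 < lr) (hg : 0 < g) :
    lr * (lw * j * gj / (lr * g) * g) = lw * (j * gj) := by
  field_simp

theorem exchange_lowers_cost (hlr : 0 < lr) (hlw : 0 < lw) (hj : 0 < j) (hg : 0 < g)
    (hgj : gj < g) : lr * (lw * j * gj / (lr * g)) < lw * j := by
  calc lr * (lw * j * gj / (lr * g)) = lw * j * (gj / g) := by field_simp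
    _ < lw * j := mul_lt_of_lt_one_right (mul_pos hlw hj) ((div_lt_one hg).2 hgj)

end Exchange

theorem no_waiting_period_jamming_general (N : ℕ)
    (lamr lamw gjam C1 : ℝ) (gsum gradar C2 : Fin N → ℝ)
    (hlamr : 0 < lamr) (hlamw : 0 < lamw) (hgjam : 0 < gjam)
    (hgradar : ∀ n, 0 < gradar n) (hgsum : ∀ n, gsum n = gradar n + gjam)
    (xs xn xj : Fin N → ℝ)
    (hxs : ∀ n, 0 ≤ xs n) (hxn : ∀ n, 0 ≤ xn n) (hxjpos : ∀ n, 0 ≤ xj n)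
    (hcon1 : ∑ n, (lamr * (xs n * gsum n) + lamw * (xj n * gjam)) = C1)
    (hcon2 : ∀ n, C2 n ≤ Real.sqrt (gradar n / gsum n) * Real.sqrt (xs n) +
      Real.sqrt (gjam / gsum n) * Real.sqrt (xn n))
    (hopt : ∀ ys yn yj : Fin N → ℝ,
      (∀ n, 0 ≤ ys n) → (∀ n, 0 ≤ yn n) → (∀ n, 0 ≤ yj n) →
      (∑ n, (lamr * (ys n * gsum n) + lamw * (yj n * gjam)) = C1) →
      (∀ n, C2 n ≤ Real.sqrt (gradar n / gsum n) * Real.sqrt (ys n) +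
        Real.sqrt (gjam / gsum n) * Real.sqrt (yn n)) →
      ∑ n, (lamr * (xs n + xn n) + lamw * xj n) ≤
        ∑ n, (lamr * (ys n + yn n) + lamw * yj n)) :
    ∀ n, xj n = 0 := by
  intro m
  by_contra hne
  have hxj : 0 < xj m := (hxjpos m).lt_of_ne' hne
  have hgjam_lt : gjam < gsum m := by linarith [hgsum m, hgradar m]
  have hg : 0 < gsum m := hgjam.trans hgjam_lt
  set δ := lamw * xj m * gjam / (lamr * gsum m)
  have hδ : 0 ≤ δ := by positivity
  have hys : ∀ n, 0 ≤ update xs m (xs m + δ) n :=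
    forall_update_iff _ (p := fun _ y => 0 ≤ y) |>.2 ⟨by linarith [hxs m], fun n _ => hxs n⟩
  have hyj : ∀ n, 0 ≤ update xj m 0 n :=
    forall_update_iff _ (p := fun _ y => 0 ≤ y) |>.2 ⟨le_rfl, fun n _ => hxjpos n⟩
  have hbudget := Fintype.sum_apply_update₂
    (fun n s j => lamr * (s * gsum n) + lamw * (j * gjam)) xs xj m (xs m + δ) 0
  have hcost := Fintype.sum_apply_update₂
    (fun n s j => lamr * (s + xn n) + lamw * j) xs xj m (xs m + δ) 0
  have hsignal : ∀ n, C2 n ≤ Real.sqrt (gradar n / gsum n) * Real.sqrt (update xs m (xs m + δ) n) +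
      Real.sqrt (gjam / gsum n) * Real.sqrt (xn n) :=
    forall_update_iff _ (p := fun n y => C2 n ≤ Real.sqrt (gradar n / gsum n) * Real.sqrt y +
      Real.sqrt (gjam / gsum n) * Real.sqrt (xn n)) |>.2
      ⟨(hcon2 m).trans (by gcongr; linarith), fun n _ => hcon2 n⟩
  have hle := hopt _ xn _ hys hxn hyj (by
    rw [hbudget, hcon1]
    linear_combination exchange_preserves_received (lw := lamw) (j := xj m) (gj := gjam) hlamr hg)
    hsignal
  linarith [exchange_lowers_cost hlamr hlamw hxj hg hgjam_lt]

/-- Lemma 3 / Appendix A: in the simplified power minimization problem, any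
optimal solution satisfies `x_jam,n = 0` for all `n` (no jamming in the
waiting period), since `g_jam < g_sum,n`. -/
theorem no_waiting_period_jamming (N : ℕ) (hN : 1 ≤ N)
    (lamr lamw gjam C1 : ℝ) (gsum gradar C2 : Fin N → ℝ)
    (hlamr : 0 < lamr) (hlamw : 0 < lamw) (hgjam : 0 < gjam)
    (hgradar : ∀ n, 0 < gradar n) (hgsum : ∀ n, gsum n = gradar n + gjam)
    (hC2 : ∀ n, 0 < C2 n) (hC1 : 0 < C1)
    (xs xn xj : Fin N → ℝ)
    (hxs : ∀ n, 0 ≤ xs n) (hxn : ∀ n, 0 ≤ xn n) (hxjpos : ∀ n, 0 ≤ xj n)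
    (hcon1 : ∑ n, (lamr * (xs n * gsum n) + lamw * (xj n * gjam)) = C1)
    (hcon2 : ∀ n, C2 n ≤ Real.sqrt (gradar n / gsum n) * Real.sqrt (xs n) +
      Real.sqrt (gjam / gsum n) * Real.sqrt (xn n))
    (hopt : ∀ ys yn yj : Fin N → ℝ,
      (∀ n, 0 ≤ ys n) → (∀ n, 0 ≤ yn n) → (∀ n, 0 ≤ yj n) →
      (∑ n, (lamr * (ys n * gsum n) + lamw * (yj n * gjam)) = C1) →
      (∀ n, C2 n ≤ Real.sqrt (gradar n / gsum n) * Real.sqrt (ys n) +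
        Real.sqrt (gjam / gsum n) * Real.sqrt (yn n)) →
      ∑ n, (lamr * (xs n + xn n) + lamw * xj n) ≤
        ∑ n, (lamr * (ys n + yn n) + lamw * yj n)) :
    ∀ n, xj n = 0 :=
  no_waiting_period_jamming_general N lamr lamw gjam C1 gsum gradar C2 hlamr hlamw hgjam hgradar
    hgsum xs xn xj hxs hxn hxjpos hcon1 hcon2 hopt
end

section
/- Under the KKT stationarity relations λ_w − μ_{3,n} + μ_4 λ_w g_jam = 0 and λ_r − μ_{1,n} + μ_4 λ_r g_sum,n − μ_{5,n} s_n = 0 with λ_r, λ_w > 0, μ_{1,n}, μ_{3,n}, μ_{5,n} ≥ 0, s_n > 0, and g_jam < g_sum,n for all n, it is impossible that μ_{3,n} = 0 for any n; consequently by complementary slackness (μ_{3,n} x_jam,n = 0, x_jam,n ≥ 0), x_jam,n = 0 for all n. -/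
/-!
If `μ_{3,n} = 0`, the first relation forces `μ_4 g_jam = -1`, so `μ_4 < 0` and
`1 + μ_4 g_sum,n < 1 + μ_4 g_jam = 0`. The second relation then equates the negative number
`λ_r (1 + μ_4 g_sum,n)` with `μ_{1,n} + μ_{5,n} s_n ≥ 0`.
-/

theorem mul_eq_neg_one_of_add_mul_mul_eq_zero {R : Type*} [CommRing R] [NoZeroDivisors R]
    {a b c : R} (ha : a ≠ 0) (h : a + b * a * c = 0) : b * c = -1 := by
  have : a * (b * c + 1) = 0 := by linear_combination h
  exact eq_neg_of_add_eq_zero_left ((mul_eq_zero.mp this).resolve_left ha)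

theorem one_add_mul_neg_of_mul_eq_neg_one {R : Type*} [Ring R] [LinearOrder R]
    [IsStrictOrderedRing R] {b c d : R} (hc : 0 < c) (hcd : c < d) (h : b * c = -1) :
    1 + b * d < 0 := by
  have hb : b < 0 := neg_of_mul_neg_left (h ▸ neg_one_lt_zero) hc.le
  calc 1 + b * d < 1 + b * c := add_lt_add_right (mul_lt_mul_of_neg_left hcd hb) 1
    _ = 0 := by rw [h, add_neg_cancel]

theorem kkt_contradiction_general (N : ℕ)
    (lamr lamw gjam : ℝ) (gsum s : Fin N → ℝ)
    (mu1 mu3 mu5 xjam : Fin N → ℝ) (mu4 : ℝ)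
    (hlamr : 0 < lamr) (hlamw : 0 < lamw) (hgjam : 0 < gjam)
    (hgsum : ∀ n, gjam < gsum n) (hs : ∀ n, 0 < s n)
    (hmu1 : ∀ n, 0 ≤ mu1 n) (hmu5 : ∀ n, 0 ≤ mu5 n)
    (hstat1 : ∀ n, lamw - mu3 n + mu4 * lamw * gjam = 0)
    (hstat2 : ∀ n, lamr - mu1 n + mu4 * lamr * gsum n - mu5 n * s n = 0)
    (hcs : ∀ n, mu3 n * xjam n = 0) :
    (∀ n, mu3 n ≠ 0) ∧ (∀ n, xjam n = 0) := by
  have hmu3_ne : ∀ n, mu3 n ≠ 0 := by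
    intro n hzero
    have hprod : mu4 * gjam = -1 :=
      mul_eq_neg_one_of_add_mul_mul_eq_zero hlamw.ne' (by simpa [hzero] using hstat1 n)
    have hneg : lamr * (1 + mu4 * gsum n) < 0 :=
      mul_neg_of_pos_of_neg hlamr (one_add_mul_neg_of_mul_eq_neg_one hgjam (hgsum n) hprod)
    linarith [hstat2 n, hmu1 n, mul_nonneg (hmu5 n) (hs n).le]
  exact ⟨hmu3_ne, fun n => (mul_eq_zero.mp (hcs n)).resolve_left (hmu3_ne n)⟩

/-- Appendix A, (43)–(44): under the KKT stationarity relations with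
`g_jam < g_sum,n`, no multiplier `μ_{3,n}` can vanish; hence by complementary
slackness `x_jam,n = 0` for all `n`. -/
theorem kkt_contradiction (N : ℕ)
    (lamr lamw gjam : ℝ) (gsum s : Fin N → ℝ)
    (mu1 mu3 mu5 xjam : Fin N → ℝ) (mu4 : ℝ)
    (hlamr : 0 < lamr) (hlamw : 0 < lamw) (hgjam : 0 < gjam)
    (hgsum : ∀ n, gjam < gsum n) (hs : ∀ n, 0 < s n)
    (hmu1 : ∀ n, 0 ≤ mu1 n) (hmu3 : ∀ n, 0 ≤ mu3 n) (hmu5 : ∀ n, 0 ≤ mu5 n)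
    (hxjam : ∀ n, 0 ≤ xjam n)
    (hstat1 : ∀ n, lamw - mu3 n + mu4 * lamw * gjam = 0)
    (hstat2 : ∀ n, lamr - mu1 n + mu4 * lamr * gsum n - mu5 n * s n = 0)
    (hcs : ∀ n, mu3 n * xjam n = 0) :
    (∀ n, mu3 n ≠ 0) ∧ (∀ n, xjam n = 0) :=
  kkt_contradiction_general N lamr lamw gjam gsum s mu1 mu3 mu5 xjam mu4 hlamr hlamw hgjam hgsum hs
    hmu1 hmu5 hstat1 hstat2 hcs
end

section
/- Feasibility criterion: the power minimization solution is valid for the original problem if and only if p_max ≥ p_th, where p_th = C_1/g_jam − (λ_r/g_jam)Σ_n C_{2,n}² g_radar,n + λ_r Σ_n C_{2,n}². Formally: the LP {min total power s.t. jamming-equality constraint and radar constraints} has optimal value p_th, and the constraint 'total power ≤ p_max' together with the equality constraint is satisfiable if and only if p_max ≥ p_th. -/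
/-!
The equality constraint fixes `∑ xj = (C₁ - λ_r ∑ xr·g_radar) / (λ_r g_jam)`, so the total
power of a feasible point is
`p_th + (λ_r / g_jam) ∑ (xr - C₂²)(g_jam - g_radar)`.
Since `g_radar < g_jam`, every summand is nonnegative, and it vanishes exactly when the radar
constraints are tight. A tight point exists: put all the remaining jamming power on one
channel, which is nonnegative because `C₁ ≥ λ_r ∑ C₂² g_radar`.
-/

open Finset

section PowerMinimization

variable {ι : Type*} [Fintype ι] (lamr gjam C1 : ℝ) (gr C2sq : ι → ℝ)

noncomputable def powerThreshold : ℝ :=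
  C1 / gjam - (lamr / gjam) * ∑ n, C2sq n * gr n + lamr * ∑ n, C2sq n

variable {lamr gjam C1 gr C2sq}

theorem totalPower_eq_powerThreshold_add (hgjam : gjam ≠ 0) {xj xr : ι → ℝ}
    (heq : ∑ n, lamr * (xj n * gjam + xr n * gr n) = C1) :
    ∑ n, lamr * (xj n + xr n) = powerThreshold lamr gjam C1 gr C2sq +
      lamr / gjam * ∑ n, (xr n - C2sq n) * (gjam - gr n) := by
  subst heq
  rw [powerThreshold, sum_div, mul_sum, mul_sum, mul_sum, ← sum_sub_distrib,
    ← sum_add_distrib, ← sum_add_distrib]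
  refine sum_congr rfl fun n _ => ?_
  field_simp
  ring

theorem powerThreshold_le_totalPower (hlam : 0 ≤ lamr) (hgjam : 0 < gjam)
    (hgr : ∀ n, gr n ≤ gjam) {xj xr : ι → ℝ} (hxr : ∀ n, C2sq n ≤ xr n)
    (heq : ∑ n, lamr * (xj n * gjam + xr n * gr n) = C1) :
    powerThreshold lamr gjam C1 gr C2sq ≤ ∑ n, lamr * (xj n + xr n) := by
  rw [totalPower_eq_powerThreshold_add hgjam.ne' heq, le_add_iff_nonneg_right]
  exact mul_nonneg (div_nonneg hlam hgjam.le) <| sum_nonneg fun n _ =>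
    mul_nonneg (sub_nonneg.2 (hxr n)) (sub_nonneg.2 (hgr n))

theorem totalPower_eq_powerThreshold (hgjam : gjam ≠ 0) {xj : ι → ℝ}
    (heq : ∑ n, lamr * (xj n * gjam + C2sq n * gr n) = C1) :
    ∑ n, lamr * (xj n + C2sq n) = powerThreshold lamr gjam C1 gr C2sq := by
  rw [totalPower_eq_powerThreshold_add (C2sq := C2sq) hgjam heq]
  simp

theorem exists_jammingPower [Nonempty ι] (hlam : 0 < lamr) (hgjam : 0 < gjam)
    (hfeas : lamr * ∑ n, C2sq n * gr n ≤ C1) :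
    ∃ xj : ι → ℝ, (∀ n, 0 ≤ xj n) ∧ ∑ n, lamr * (xj n * gjam + C2sq n * gr n) = C1 := by
  classical
  obtain ⟨i⟩ := ‹Nonempty ι›
  set t := (C1 - lamr * ∑ n, C2sq n * gr n) / (lamr * gjam)
  have ht : 0 ≤ t := div_nonneg (sub_nonneg.2 hfeas) (by positivity)
  refine ⟨Pi.single i t, (Pi.single_nonneg (α := fun _ : ι => ℝ)).2 ht, ?_⟩
  simp only [mul_add, sum_add_distrib, ← mul_sum, mul_comm _ gjam, sum_pi_single', mem_univ,
    if_true, t]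
  field_simp
  ring

end PowerMinimization

theorem power_min_feasibility_criterion_general (N : ℕ) (hN : 1 ≤ N)
    (lamr gjam C1 pmax : ℝ) (gr C2sq : Fin N → ℝ)
    (hlam : 0 < lamr) (hgjam : 0 < gjam)
    (hgrlt : ∀ n, gr n < gjam)
    (hfeas : lamr * ∑ n, C2sq n * gr n ≤ C1)
    (pth : ℝ)
    (hpth : pth = C1 / gjam - (lamr / gjam) * ∑ n, C2sq n * gr n +
      lamr * ∑ n, C2sq n) :
    IsLeast {p : ℝ | ∃ xj xr : Fin N → ℝ, (∀ n, 0 ≤ xj n) ∧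
      (∀ n, C2sq n ≤ xr n) ∧
      (∑ n, lamr * (xj n * gjam + xr n * gr n) = C1) ∧
      p = ∑ n, lamr * (xj n + xr n)} pth ∧
    ((∃ xj xr : Fin N → ℝ, (∀ n, 0 ≤ xj n) ∧ (∀ n, C2sq n ≤ xr n) ∧
      (∑ n, lamr * (xj n * gjam + xr n * gr n) = C1) ∧
      ∑ n, lamr * (xj n + xr n) ≤ pmax) ↔ pth ≤ pmax) := by
  change pth = powerThreshold lamr gjam C1 gr C2sq at hpth
  subst hpth
  have : Nonempty (Fin N) := ⟨⟨0, hN⟩⟩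
  have hlb {xj xr : Fin N → ℝ} (hxr : ∀ n, C2sq n ≤ xr n)
      (heq : ∑ n, lamr * (xj n * gjam + xr n * gr n) = C1) :=
    powerThreshold_le_totalPower hlam.le hgjam (fun n => (hgrlt n).le) hxr heq
  obtain ⟨xj, hxj, heq⟩ := exists_jammingPower hlam hgjam hfeas
  have hopt := totalPower_eq_powerThreshold hgjam.ne' heq
  refine ⟨⟨⟨xj, C2sq, hxj, fun _ => le_rfl, heq, hopt.symm⟩, ?_⟩, ?_, fun h => ?_⟩
  · rintro p ⟨xj', xr', -, hxr', heq', rfl⟩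
    exact hlb hxr' heq'
  · rintro ⟨xj', xr', -, hxr', heq', hle⟩
    exact (hlb hxr' heq').trans hle
  · exact ⟨xj, C2sq, hxj, fun _ => le_rfl, heq, hopt ▸ h⟩

/-- Case-classification criterion (Section III-B, Theorem 2): the power
minimization LP has optimal value
`p_th = C₁/g_jam − (λ_r/g_jam) Σ C_{2,n}² g_radar,n + λ_r Σ C_{2,n}²`, and a
feasible point with total power at most `p_max` exists iff `p_max ≥ p_th`. -/
theorem power_min_feasibility_criterion (N : ℕ) (hN : 1 ≤ N)
    (lamr gjam C1 pmax : ℝ) (gr C2sq : Fin N → ℝ)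
    (hlam : 0 < lamr) (hgjam : 0 < gjam)
    (hgr : ∀ n, 0 ≤ gr n) (hgrlt : ∀ n, gr n < gjam)
    (hC2sq : ∀ n, 0 < C2sq n)
    (hfeas : lamr * ∑ n, C2sq n * gr n ≤ C1)
    (pth : ℝ)
    (hpth : pth = C1 / gjam - (lamr / gjam) * ∑ n, C2sq n * gr n +
      lamr * ∑ n, C2sq n) :
    IsLeast {p : ℝ | ∃ xj xr : Fin N → ℝ, (∀ n, 0 ≤ xj n) ∧
      (∀ n, C2sq n ≤ xr n) ∧
      (∑ n, lamr * (xj n * gjam + xr n * gr n) = C1) ∧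
      p = ∑ n, lamr * (xj n + xr n)} pth ∧
    ((∃ xj xr : Fin N → ℝ, (∀ n, 0 ≤ xj n) ∧ (∀ n, C2sq n ≤ xr n) ∧
      (∑ n, lamr * (xj n * gjam + xr n * gr n) = C1) ∧
      ∑ n, lamr * (xj n + xr n) ≤ pmax) ↔ pth ≤ pmax) :=
  power_min_feasibility_criterion_general N hN lamr gjam C1 pmax gr C2sq hlam hgjam hgrlt hfeas pth
    hpth
end
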